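/- arXiv:1808.07821 — 4 statements merged into one kernel-verified Lean document; each statement's English description precedes it below -/
import Mathlib

section
/- Fix α ∈ ℝ, a continuous function B : [0,∞) → ℝ with B(0) = 0, and a function u₀ : ℝ → ℝ. Define I(t) = ∫_0^t e^{−α B(s)} ds and, for each γ ∈ ℝ, the characteristic X^γ(t) = e^{α B(t)} (γ + u₀(γ) I(t)). Suppose M ≥ 0 is an upper bound for the negative slopes of u₀, i.e., −(u₀(b) − u₀(a))/(b − a) ≤ M for all a ≠ b. If t ≥ 0 satisfies M · I(t) < 1, then X^a(t) ≠ X^b(t) for all a ≠ b; that is, no two distinct characteristics have crossed by time t. -/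
open Filter Set

/-- Lower bound on the first crossing time: if all negative slopes of `u₀` are
bounded by `M ≥ 0` and `M * I t < 1`, then no two distinct characteristics have
crossed by time `t`. -/
theorem no_crossing_before_hitting_time
    (α M : ℝ) (hM : 0 ≤ M) (B : ℝ → ℝ) (hB : Continuous B) (hB0 : B 0 = 0)
    (u₀ : ℝ → ℝ) (I : ℝ → ℝ) (X : ℝ → ℝ → ℝ)
    (hI : ∀ t : ℝ, I t = ∫ s in (0:ℝ)..t, Real.exp (-α * B s))
    (hX : ∀ γ t : ℝ, X γ t = Real.exp (α * B t) * (γ + u₀ γ * I t))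
    (hslope : ∀ a b : ℝ, a ≠ b → -((u₀ b - u₀ a) / (b - a)) ≤ M)
    (t : ℝ) (ht : 0 ≤ t) (hMt : M * I t < 1) :
    ∀ a b : ℝ, a ≠ b → X a t ≠ X b t := by
  -- I t ≥ 0 since the integrand is positive
  have hI0 : 0 ≤ I t := by
    rw [hI]
    exact intervalIntegral.integral_nonneg ht (fun s _ => (Real.exp_pos _).le)
  -- WLOG-style core: derive a contradiction when a < b and X a t = X b t
  have key : ∀ a b : ℝ, a < b → X a t ≠ X b t := by
    intro a b hab heq
    rw [hX, hX] at heq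
    have hexp : Real.exp (α * B t) ≠ 0 := (Real.exp_pos _).ne'
    have h1 : a + u₀ a * I t = b + u₀ b * I t := mul_left_cancel₀ hexp heq
    have h2 : (u₀ b - u₀ a) * I t = -(b - a) := by linarith
    have hne : a ≠ b := ne_of_lt hab
    have hs := hslope a b hne
    have hba : 0 < b - a := sub_pos.mpr hab
    have h3 : -(u₀ b - u₀ a) ≤ M * (b - a) := by
      rw [← neg_div] at hs
      exact (div_le_iff₀ hba).mp hs
    have h4 : -(u₀ b - u₀ a) * I t ≤ M * (b - a) * I t :=
      mul_le_mul_of_nonneg_right h3 hI0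
    have h5 : M * (b - a) * I t < b - a := by
      have : M * I t * (b - a) < 1 * (b - a) :=
        mul_lt_mul_of_pos_right hMt hba
      nlinarith
    nlinarith
  intro a b hab
  rcases lt_or_gt_of_ne hab with h | h
  · exact key a b h
  · exact fun he => key b a h he.symm
end

section
/- Let σ > 0 and C ∈ ℝ satisfy −σ < C/2. Then there is no differentiable function y : [0,∞) → ℝ such that y(0) = −σ and y′(t) ≤ −y(t)² + (C/2) y(t) for all t ≥ 0. In other words, any solution of this Riccati-type differential inequality starting at −σ must blow up to −∞ in finite time. -/
open Set

/-- Riccati-type blow-up: if `0 < σ` and `-σ < C/2`, then there is no function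
`y` differentiable on `[0,∞)` with `y 0 = -σ` and
`y' t ≤ -(y t)^2 + (C/2) * y t` for all `t ≥ 0`. -/
theorem riccati_inequality_blowup
    (σ C : ℝ) (hσ : 0 < σ) (hC : -σ < C / 2) :
    ¬ ∃ (y y' : ℝ → ℝ),
      y 0 = -σ ∧
      (∀ t ∈ Set.Ici (0:ℝ), HasDerivWithinAt y (y' t) (Set.Ici 0) t) ∧
      (∀ t ∈ Set.Ici (0:ℝ), y' t ≤ -(y t)^2 + (C / 2) * y t) := by
  rintro ⟨y, y', h0, hderiv, hineq⟩
  set δ : ℝ := σ + C / 2 with hδdef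
  have hδ : 0 < δ := by dsimp [δ]; linarith
  set k : ℝ := min 1 (δ / σ) with hkdef
  have hk : 0 < k := lt_min one_pos (div_pos hδ hσ)
  set T : ℝ := 4 / (k * σ) with hTdef
  have hT : 0 < T := div_pos (by norm_num) (mul_pos hk hσ)
  -- continuity of y on [0, T]
  have hyc : ContinuousOn y (Icc 0 T) := fun t ht =>
    ((hderiv t ht.1).continuousWithinAt).mono Icc_subset_Ici_self
  -- Step 1: y stays ≤ -σ on [0, T]
  have hneg : ∀ ⦃t⦄, t ∈ Icc (0:ℝ) T → y t ≤ -σ := by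
    have := image_le_of_deriv_right_lt_deriv_boundary (f := y) (f' := y')
      (a := 0) (b := T) hyc
      (fun x hx => (hderiv x hx.1).mono (Ici_subset_Ici.mpr hx.1))
      (B := fun _ => -σ) (B' := fun _ => 0)
      (by rw [h0]) (fun x => hasDerivAt_const x (-σ))
      ?_
    · exact this
    · intro x hx hxσ
      have h1 := hineq x hx.1
      have hyx : y x = -σ := hxσ
      rw [hyx] at h1
      have h2 : y' x ≤ -σ * δ := by rw [hδdef]; nlinarith
      have h3 : 0 < σ * δ := mul_pos hσ hδ
      show y' x < 0
      nlinarith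
  -- Step 2: the function g = 1/y has derivative ≥ k on [0,T]
  have hyne : ∀ ⦃t⦄, t ∈ Icc (0:ℝ) T → y t ≠ 0 := fun t ht =>
    ne_of_lt (lt_of_le_of_lt (hneg ht) (by linarith))
  set g : ℝ → ℝ := fun t => (y t)⁻¹ with hgdef
  have hgc : ContinuousOn g (Icc 0 T) := hyc.inv₀ hyne
  have hgderiv : ∀ t ∈ Icc (0:ℝ) T,
      HasDerivWithinAt g (-(y' t) / (y t) ^ 2) (Icc 0 T) t := by
    intro t ht
    exact ((hderiv t ht.1).inv (hyne ht)).mono Icc_subset_Ici_self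
  have hgbound : ∀ t ∈ Icc (0:ℝ) T, k ≤ -(y' t) / (y t) ^ 2 := by
    intro t ht
    have hy : y t ≤ -σ := hneg ht
    have hy0 : y t < 0 := lt_of_le_of_lt hy (by linarith)
    have hy2 : 0 < (y t) ^ 2 := by nlinarith
    have h1 : y' t ≤ -(y t)^2 + (C / 2) * y t := hineq t ht.1
    have hg1 : (y t)⁻¹ ≥ -σ⁻¹ := by
      rw [ge_iff_le, neg_le, ← inv_neg]
      exact inv_anti₀ hσ (by linarith)
    have hg0 : (y t)⁻¹ < 0 := inv_neg''.mpr hy0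
    have key : 1 - (C / 2) * (y t)⁻¹ ≤ -(y' t) / (y t) ^ 2 := by
      rw [le_div_iff₀ hy2]
      have h2 : (y t)⁻¹ * (y t) ^ 2 = y t := by
        rw [sq, ← mul_assoc, inv_mul_cancel₀ hy0.ne, one_mul]
      have h3 : (1 - (C / 2) * (y t)⁻¹) * (y t) ^ 2
          = (y t) ^ 2 - (C / 2) * (y t) := by
        calc (1 - (C / 2) * (y t)⁻¹) * (y t) ^ 2
            = (y t) ^ 2 - (C / 2) * ((y t)⁻¹ * (y t) ^ 2) := by ring
          _ = (y t) ^ 2 - (C / 2) * (y t) := by rw [h2]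
      rw [h3]; linarith
    refine le_trans ?_ key
    rcases le_or_gt 0 C with hCpos | hCneg
    · have h4 : (C / 2) * (y t)⁻¹ ≤ 0 :=
        mul_nonpos_of_nonneg_of_nonpos (by linarith) hg0.le
      have hk1 : k ≤ 1 := min_le_left _ _
      linarith
    · have hσg : -1 ≤ σ * (y t)⁻¹ := by
        have h7 := mul_le_mul_of_nonneg_left hg1 hσ.le
        rw [mul_neg, mul_inv_cancel₀ hσ.ne'] at h7
        linarith
      have hks : k ≤ δ / σ := min_le_right _ _
      have h5 : δ / σ ≤ 1 - (C / 2) * (y t)⁻¹ := by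
        rw [div_le_iff₀ hσ, hδdef]
        nlinarith
      linarith
  -- Step 3: g grows at least linearly, contradiction
  have hmono : StrictMonoOn (fun t => g t - (k / 2) * t) (Icc 0 T) := by
    apply strictMonoOn_of_hasDerivWithinAt_pos (convex_Icc 0 T)
      (hgc.sub ((continuous_const.mul continuous_id).continuousOn))
      (f' := fun t => -(y' t) / (y t) ^ 2 - k / 2)
    · intro x hx
      have hx' : x ∈ Icc (0:ℝ) T := interior_subset hx
      exact (((hgderiv x hx').mono interior_subset).sub
        (((hasDerivAt_const x (k/2)).mul (hasDerivAt_id x)).hasDerivWithinAt)).congr_deriv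
        (by ring)
    · intro x hx
      have hx' : x ∈ Icc (0:ℝ) T := interior_subset hx
      have := hgbound x hx'
      linarith
  have h0T : (0:ℝ) ∈ Icc (0:ℝ) T := ⟨le_refl 0, hT.le⟩
  have hTT : T ∈ Icc (0:ℝ) T := ⟨hT.le, le_refl T⟩
  have hlt := hmono h0T hTT hT
  have hg0 : g 0 = -σ⁻¹ := by simp [hgdef, h0, inv_neg]
  have hgT : g T < 0 := inv_neg''.mpr (lt_of_le_of_lt (hneg hTT) (by linarith))
  have hkT : (k / 2) * T = 2 / σ := by
    rw [hTdef]; field_simp [hk.ne', hσ.ne']; ring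
  have h1σ : (0:ℝ) < -σ⁻¹ + 2 / σ := by
    have h6 : -σ⁻¹ + 2 / σ = σ⁻¹ := by field_simp; ring
    rw [h6]; positivity
  simp only [mul_zero, sub_zero, hg0] at hlt
  rw [hkT] at hlt
  linarith
end

section
/- Let σ > 0, C ≠ 0, T > 0, and let y : [0,T] → ℝ be differentiable with y(0) = −σ and y′(t) ≤ −y(t)² + (C/2) y(t) for all t ∈ [0,T]. Assume that 1 − (2σ/C)(e^{Ct/2} − 1) > 0 for all t ∈ [0,T]. Then for all t ∈ [0,T], y(t) ≤ −σ e^{Ct/2} / (1 − (2σ/C)(e^{Ct/2} − 1)). -/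
/-!
Along the Riccati inequality `y' ≤ -y² + k y` the term `-y²` only helps, so Grönwall's
inequality for `y' ≤ k y` keeps `y` negative. Then `u = -1/y` satisfies the linear inequality
`u' = y'/y² ≤ -k u - 1`, and Grönwall's bound for it is, for `k = C/2`, exactly `-1/z` for the
explicit solution `z` of `z' = -z² + (C/2) z`, `z(0) = -σ`.
-/

open Set Real

theorem le_gronwallBound_of_hasDerivWithinAt_Icc {f f' : ℝ → ℝ} {δ K ε a b : ℝ}
    (hf : ∀ x ∈ Icc a b, HasDerivWithinAt f (f' x) (Icc a b) x) (ha : f a ≤ δ)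
    (bound : ∀ x ∈ Ico a b, f' x ≤ K * f x + ε) :
    ∀ x ∈ Icc a b, f x ≤ gronwallBound δ K ε (x - a) :=
  le_gronwallBound_of_liminf_deriv_right_le (fun x hx => (hf x hx).continuousWithinAt)
    (fun x hx _ hr => ((hf x (Ico_subset_Icc_self hx)).mono_of_mem_nhdsWithin
      (Icc_mem_nhdsGE_of_mem hx)).liminf_right_slope_le hr) ha bound

section Riccati

variable {y y' : ℝ → ℝ} {k a b : ℝ}

theorem neg_on_Icc_of_riccati_le (hy : ∀ x ∈ Icc a b, HasDerivWithinAt y (y' x) (Icc a b) x)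
    (hineq : ∀ x ∈ Icc a b, y' x ≤ -y x ^ 2 + k * y x) (ha : y a < 0) :
    ∀ x ∈ Icc a b, y x < 0 := by
  intro x hx
  have hlin : ∀ x ∈ Ico a b, y' x ≤ k * y x + 0 := fun x hx => by
    nlinarith [hineq x (Ico_subset_Icc_self hx), sq_nonneg (y x)]
  calc y x ≤ gronwallBound (y a) k 0 (x - a) :=
        le_gronwallBound_of_hasDerivWithinAt_Icc hy le_rfl hlin x hx
    _ = y a * exp (k * (x - a)) := gronwallBound_ε0 _ _ _
    _ < 0 := mul_neg_of_neg_of_pos ha (exp_pos _)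

theorem neg_inv_le_gronwallBound_of_riccati_le
    (hy : ∀ x ∈ Icc a b, HasDerivWithinAt y (y' x) (Icc a b) x)
    (hineq : ∀ x ∈ Icc a b, y' x ≤ -y x ^ 2 + k * y x) (ha : y a < 0) :
    ∀ x ∈ Icc a b, -(y x)⁻¹ ≤ gronwallBound (-(y a)⁻¹) (-k) (-1) (x - a) := by
  have hneg := neg_on_Icc_of_riccati_le hy hineq ha
  refine le_gronwallBound_of_hasDerivWithinAt_Icc (f' := fun x => y' x / y x ^ 2)
    (fun x hx => ?_) le_rfl (fun x hx => ?_)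
  · exact ((hy x hx).inv (hneg x hx).ne).neg.congr_deriv (by ring)
  · have hx' := Ico_subset_Icc_self hx
    have hyx : y x ≠ 0 := (hneg x hx').ne
    calc y' x / y x ^ 2 ≤ (-y x ^ 2 + k * y x) / y x ^ 2 := by gcongr; exact hineq x hx'
      _ = -k * -(y x)⁻¹ + -1 := by field_simp; ring

end Riccati

theorem riccati_inequality_comparison_bound_general
    (σ C T : ℝ) (hσ : 0 < σ) (hC : C ≠ 0)
    (y y' : ℝ → ℝ) (hy0 : y 0 = -σ)
    (hderiv : ∀ t ∈ Set.Icc (0:ℝ) T, HasDerivWithinAt y (y' t) (Set.Icc 0 T) t)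
    (hineq : ∀ t ∈ Set.Icc (0:ℝ) T, y' t ≤ -(y t)^2 + (C / 2) * y t)
    (hden : ∀ t ∈ Set.Icc (0:ℝ) T, 0 < 1 - (2 * σ / C) * (Real.exp (C * t / 2) - 1)) :
    ∀ t ∈ Set.Icc (0:ℝ) T,
      y t ≤ -σ * Real.exp (C * t / 2) / (1 - (2 * σ / C) * (Real.exp (C * t / 2) - 1)) := by
  intro t ht
  have hy0' : y 0 < 0 := by linarith
  have hyt : y t < 0 := neg_on_Icc_of_riccati_le hderiv hineq hy0' t ht
  have hrecip := neg_inv_le_gronwallBound_of_riccati_le hderiv hineq hy0' t ht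
  set E := exp (C * t / 2)
  set D := 1 - (2 * σ / C) * (E - 1)
  have hE : 0 < E := exp_pos _
  have hbound : gronwallBound (-(y 0)⁻¹) (-(C / 2)) (-1) (t - 0) = D / (σ * E) := by
    have hexp : exp (-(C / 2) * t) = E⁻¹ := by rw [← exp_neg]; ring_nf
    simp only [gronwallBound_of_K_ne_0 (neg_ne_zero.mpr (div_ne_zero hC two_ne_zero)), hy0,
      sub_zero, hexp, D]
    field_simp
    ring
  rw [hbound, neg_inv, ← one_div, div_le_div_iff₀ (by linarith) (by positivity)] at hrecip
  rw [le_div_iff₀ (hden t ht)]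
  linarith

/-- Explicit comparison bound for the Riccati differential inequality
`y' ≤ -y² + (C/2) y`, `y 0 = -σ`, on a time interval where the denominator
`1 - (2σ/C)(e^{Ct/2} - 1)` stays positive. -/
theorem riccati_inequality_comparison_bound
    (σ C T : ℝ) (hσ : 0 < σ) (hC : C ≠ 0) (hT : 0 < T)
    (y y' : ℝ → ℝ) (hy0 : y 0 = -σ)
    (hderiv : ∀ t ∈ Set.Icc (0:ℝ) T, HasDerivWithinAt y (y' t) (Set.Icc 0 T) t)
    (hineq : ∀ t ∈ Set.Icc (0:ℝ) T, y' t ≤ -(y t)^2 + (C / 2) * y t)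
    (hden : ∀ t ∈ Set.Icc (0:ℝ) T, 0 < 1 - (2 * σ / C) * (Real.exp (C * t / 2) - 1)) :
    ∀ t ∈ Set.Icc (0:ℝ) T,
      y t ≤ -σ * Real.exp (C * t / 2) / (1 - (2 * σ / C) * (Real.exp (C * t / 2) - 1)) :=
  riccati_inequality_comparison_bound_general σ C T hσ hC y y' hy0 hderiv hineq hden
end

section
/- Let a, b : ℝ → ℝ be smooth functions that are periodic with period 1, and define the first-order differential operator Q by (Qf)(x) = a(x) f′(x) + b(x) f(x). Then there exists a constant C > 0, depending only on a and b, such that for every twice continuously differentiable 1-periodic function f : ℝ → ℝ, ∫_0^1 (Q(Qf))(x) f(x) dx + ∫_0^1 ((Qf)(x))² dx ≤ C ∫_0^1 f(x)² dx. -/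
open intervalIntegral

private lemma periodic_deriv' {f : ℝ → ℝ} {c : ℝ} (hf : Function.Periodic f c) :
    Function.Periodic (deriv f) c := by
  intro x
  have : (fun y => f (y + c)) = f := funext fun y => hf y
  rw [← deriv_comp_add_const, this]

/-- The `L²` cancellation estimate `⟨Q²f, f⟩ + ⟨Qf, Qf⟩ ≤ C ‖f‖²` on the torus
(realized as 1-periodic functions on `ℝ`), for a first-order operator
`Q f = a * f' + b * f` with smooth 1-periodic coefficients. -/
theorem first_order_operator_cancellation
    (a b : ℝ → ℝ) (ha : ContDiff ℝ (⊤ : ℕ∞) a) (hb : ContDiff ℝ (⊤ : ℕ∞) b)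
    (hap : Function.Periodic a 1) (hbp : Function.Periodic b 1)
    (Q : (ℝ → ℝ) → ℝ → ℝ)
    (hQ : ∀ (f : ℝ → ℝ) (x : ℝ), Q f x = a x * deriv f x + b x * f x) :
    ∃ C : ℝ, 0 < C ∧ ∀ f : ℝ → ℝ, ContDiff ℝ 2 f → Function.Periodic f 1 →
      (∫ x in (0:ℝ)..1, Q (Q f) x * f x) + (∫ x in (0:ℝ)..1, (Q f x)^2)
        ≤ C * ∫ x in (0:ℝ)..1, (f x)^2 := by
  have haT : ContDiff ℝ (⊤ : ℕ∞) a := ha.of_le (by exact_mod_cast le_top)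
  have hbT : ContDiff ℝ (⊤ : ℕ∞) b := hb.of_le (by exact_mod_cast le_top)
  have haD : Differentiable ℝ a := haT.differentiable (by simp)
  have ha' : ContDiff ℝ (⊤ : ℕ∞) (deriv a) := (contDiff_infty_iff_deriv.mp haT).2
  have ha'D : Differentiable ℝ (deriv a) := ha'.differentiable (by simp)
  have ha'' : Continuous (deriv (deriv a)) := ha'.continuous_deriv (by exact_mod_cast le_top)
  have hbD : Differentiable ℝ b := hbT.differentiable (by simp)
  have hb'c : Continuous (deriv b) := hbT.continuous_deriv (by exact_mod_cast le_top)
  set h : ℝ → ℝ := fun x => b x * (2 * b x - deriv a x)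
      - (1/2) * (deriv a x * (2 * b x - deriv a x)
        + a x * (2 * deriv b x - deriv (deriv a) x)) with hh
  have hcont : Continuous h := by
    apply Continuous.sub
    · exact hbT.continuous.mul ((continuous_const.mul hbT.continuous).sub ha'.continuous)
    · exact continuous_const.mul
        ((ha'.continuous.mul ((continuous_const.mul hbT.continuous).sub ha'.continuous)).add
          (haT.continuous.mul ((continuous_const.mul hb'c).sub ha'')))
  obtain ⟨M, hM⟩ := isCompact_Icc.exists_bound_of_continuousOn
    (hcont.continuousOn : ContinuousOn h (Set.Icc (0:ℝ) 1))
  have hM0 : 0 ≤ M := le_trans (norm_nonneg _) (hM 0 (by norm_num))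
  refine ⟨M + 1, by linarith, fun f hf hfp => ?_⟩
  have hf2 : ContDiff ℝ ((1 : ℕ) + 1) f := by exact_mod_cast hf
  have hfD : Differentiable ℝ f := hf2.differentiable (by norm_num)
  have hf' : ContDiff ℝ 1 (deriv f) := (contDiff_succ_iff_deriv.mp hf2).2.2
  have hf'D : Differentiable ℝ (deriv f) := hf'.differentiable one_ne_zero
  have hf'' : Continuous (deriv (deriv f)) := hf'.continuous_deriv le_rfl
  set g : ℝ → ℝ := fun x => a x * deriv f x + b x * f x with hg
  have hQf : Q f = g := funext fun x => hQ f x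
  set Dg : ℝ → ℝ := fun x => deriv a x * deriv f x + a x * deriv (deriv f) x
      + (deriv b x * f x + b x * deriv f x) with hDg
  have hgD : ∀ x, HasDerivAt g (Dg x) x := fun x =>
    (((haD x).hasDerivAt.mul (hf'D x).hasDerivAt).add
      ((hbD x).hasDerivAt.mul (hfD x).hasDerivAt))
  have hderg : ∀ x, deriv g x = Dg x := fun x => (hgD x).deriv
  have hQQ : ∀ x, Q (Q f) x = a x * Dg x + b x * g x := fun x => by
    rw [hQf, hQ g x, hderg x]
  set c : ℝ → ℝ := fun x => 2 * b x - deriv a x with hc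
  have hcD : ∀ x, HasDerivAt c (2 * deriv b x - deriv (deriv a) x) x := fun x =>
    ((hbD x).hasDerivAt.const_mul 2).sub (ha'D x).hasDerivAt
  set F : ℝ → ℝ := fun x => a x * f x * g x + (1/2) * a x * c x * (f x)^2 with hF
  set Fd : ℝ → ℝ := fun x =>
    ((deriv a x * f x + a x * deriv f x) * g x + a x * f x * Dg x)
    + (((1/2) * deriv a x * c x + (1/2) * a x * (2 * deriv b x - deriv (deriv a) x)) * (f x)^2
      + (1/2) * a x * c x * (2 * f x * deriv f x)) with hFd
  have hFD : ∀ x, HasDerivAt F (Fd x) x := by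
    intro x
    have h1 : HasDerivAt (fun y => a y * f y * g y)
        ((deriv a x * f x + a x * deriv f x) * g x + a x * f x * Dg x) x :=
      (((haD x).hasDerivAt.mul (hfD x).hasDerivAt)).mul (hgD x)
    have h2 : HasDerivAt (fun y => (1/2) * a y * c y * (f y)^2)
        (((1/2) * deriv a x * c x + (1/2) * a x * (2 * deriv b x - deriv (deriv a) x)) * (f x)^2
          + (1/2) * a x * c x * (2 * f x * deriv f x)) x := by
      have ha2 : HasDerivAt (fun y => (1/2) * a y) ((1/2) * deriv a x) x :=
        (haD x).hasDerivAt.const_mul _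
      have hsq : HasDerivAt (fun y => (f y)^2) (2 * f x * deriv f x) x := by
        have : HasDerivAt (fun y => (f y)^2) _ x := (hfD x).hasDerivAt.pow 2
        simpa [mul_comm, mul_assoc, mul_left_comm] using this
      exact (ha2.mul (hcD x)).mul hsq
    exact h1.add h2
  have hgc : Continuous g :=
    (haT.continuous.mul hf'.continuous).add (hbT.continuous.mul hfD.continuous)
  have hcc : Continuous c := (continuous_const.mul hbT.continuous).sub ha'.continuous
  have hDgc : Continuous Dg :=
    ((ha'.continuous.mul hf'.continuous).add (haT.continuous.mul hf'')).add
      ((hb'c.mul hfD.continuous).add (hbT.continuous.mul hf'.continuous))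
  have hFdcont : Continuous Fd := by
    apply Continuous.add
    · exact (((ha'.continuous.mul hfD.continuous).add
        (haT.continuous.mul hf'.continuous)).mul hgc).add
        (((haT.continuous.mul hfD.continuous)).mul hDgc)
    · exact (((continuous_const.mul ha'.continuous).mul hcc).add
        ((continuous_const.mul haT.continuous).mul
          ((continuous_const.mul hb'c).sub ha''))).mul (continuous_pow 2 |>.comp hfD.continuous)
        |>.add (((continuous_const.mul haT.continuous).mul hcc).mul
          ((continuous_const.mul hfD.continuous).mul hf'.continuous))
  have hderF : deriv F = Fd := funext fun x => (hFD x).deriv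
  -- periodicity values
  have hap' : Function.Periodic (deriv a) 1 := periodic_deriv' hap
  have hfp' : Function.Periodic (deriv f) 1 := periodic_deriv' hfp
  have e : ∀ u : ℝ → ℝ, Function.Periodic u 1 → u 1 = u 0 := fun u hu => by
    simpa using hu 0
  have hF10 : F 1 = F 0 := by
    simp only [hF, hg, hc, e a hap, e b hbp, e f hfp, e (deriv f) hfp', e (deriv a) hap']
  -- rewrite the integrals
  have int1 : IntervalIntegrable (fun x => (a x * Dg x + b x * g x) * f x)
      MeasureTheory.volume 0 1 :=
    (((haT.continuous.mul hDgc).add (hbT.continuous.mul hgc)).mul hfD.continuous).intervalIntegrable 0 1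
  have int2 : IntervalIntegrable (fun x => (g x)^2) MeasureTheory.volume 0 1 :=
    ((continuous_pow 2).comp hgc).intervalIntegrable 0 1
  have intFd : IntervalIntegrable Fd MeasureTheory.volume 0 1 :=
    hFdcont.intervalIntegrable 0 1
  have inthf2 : IntervalIntegrable (fun x => h x * (f x)^2) MeasureTheory.volume 0 1 :=
    (hcont.mul ((continuous_pow 2).comp hfD.continuous)).intervalIntegrable 0 1
  have intf2 : IntervalIntegrable (fun x => (M+1) * (f x)^2) MeasureTheory.volume 0 1 :=
    (continuous_const.mul ((continuous_pow 2).comp hfD.continuous)).intervalIntegrable 0 1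
  have step1 : (∫ x in (0:ℝ)..1, Q (Q f) x * f x) + (∫ x in (0:ℝ)..1, (Q f x)^2)
      = ∫ x in (0:ℝ)..1, (Fd x + h x * (f x)^2) := by
    have e1 : (∫ x in (0:ℝ)..1, Q (Q f) x * f x)
        = ∫ x in (0:ℝ)..1, (a x * Dg x + b x * g x) * f x :=
      intervalIntegral.integral_congr (fun x _ => by rw [hQQ x])
    have e2 : (∫ x in (0:ℝ)..1, (Q f x)^2) = ∫ x in (0:ℝ)..1, (g x)^2 :=
      intervalIntegral.integral_congr (fun x _ => by rw [hQf])
    rw [e1, e2, ← intervalIntegral.integral_add int1 int2]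
    refine intervalIntegral.integral_congr (fun x _ => ?_)
    simp only [hg, hDg, hFd, hc, hh]
    ring
  have step2 : (∫ x in (0:ℝ)..1, (Fd x + h x * (f x)^2))
      = ∫ x in (0:ℝ)..1, h x * (f x)^2 := by
    rw [intervalIntegral.integral_add intFd inthf2]
    have : (∫ x in (0:ℝ)..1, Fd x) = F 1 - F 0 := by
      rw [show (fun x => Fd x) = deriv F from hderF.symm]
      exact intervalIntegral.integral_deriv_eq_sub
        (fun x _ => (hFD x).differentiableAt) (by rw [hderF]; exact intFd)
    rw [this, hF10, sub_self, zero_add]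
  rw [step1, step2, ← intervalIntegral.integral_const_mul]
  apply intervalIntegral.integral_mono_on (by norm_num) inthf2 intf2
  intro x hx
  have hb1 := hM x hx
  have hb2 : h x ≤ M + 1 := by
    have := (abs_le.mp (by simpa using hb1)).2
    linarith
  exact mul_le_mul_of_nonneg_right hb2 (sq_nonneg _)
end
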